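/- (Theorem 1) For a bounded sequence x ∈ ℓ^∞(X), the spectrum σ(x) is empty — that is, the holomorphic function g(λ) = R(λ, S̄)x̄, defined for |λ| ≠ 1, extends to an entire function ℂ → Y — if and only if lim_{n→∞} x_n = 0 in X. -/

import Mathlib

set_option linter.unusedSectionVars false

open Filter Topology
open scoped ENNReal

noncomputable section

variable (X : Type*) [NormedAddCommGroup X] [NormedSpace ℂ X] [CompleteSpace X]

/-- `ℓ^∞(X)`: the Banach space of bounded sequences in `X` with the sup norm. -/
abbrev Linf : Type _ := ↥(lp (fun _ : ℕ => X) ∞)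

/-- `c₀(X)`: the subspace of `ℓ^∞(X)` of sequences converging to `0`. -/
def czero : Submodule ℂ (Linf X) where
  carrier := {f | Tendsto (fun n => f n) atTop (𝓝 (0 : X))}
  add_mem' := by
    intro f g hf hg
    simpa [lp.coeFn_add] using hf.add hg
  zero_mem' := by
    simp [lp.coeFn_zero]
  smul_mem' := by
    intro c f hf
    simpa [lp.coeFn_smul] using hf.const_smul c

instance : IsClosed ((czero X : Set (Linf X))) := by
  rw [← isSeqClosed_iff_isClosed]
  intro F f hF hFf
  show Tendsto (fun n => f n) atTop (𝓝 (0 : X))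
  rw [Metric.tendsto_atTop]
  intro ε hε
  obtain ⟨k, hk⟩ := (Metric.tendsto_atTop.mp hFf (ε / 2) (by linarith)).imp
    (fun k h => h k le_rfl)
  have hFk : Tendsto (fun n => (F k) n) atTop (𝓝 (0 : X)) := hF k
  obtain ⟨N, hN⟩ := Metric.tendsto_atTop.mp hFk (ε / 2) (by linarith)
  refine ⟨N, fun n hn => ?_⟩
  have h1 : ‖f n - (F k) n‖ ≤ ‖f - F k‖ := by
    have := lp.norm_apply_le_norm (ENNReal.top_ne_zero) (f - F k) n
    simpa [lp.coeFn_sub] using this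
  have h2 : ‖f - F k‖ < ε / 2 := by
    rw [← dist_eq_norm] at *
    rw [dist_comm]
    exact hk
  have h3 : ‖(F k) n‖ < ε / 2 := by simpa [dist_eq_norm] using hN n hn
  have : ‖f n‖ ≤ ‖f n - (F k) n‖ + ‖(F k) n‖ := by
    calc ‖f n‖ = ‖(f n - (F k) n) + (F k) n‖ := by rw [sub_add_cancel]
      _ ≤ ‖f n - (F k) n‖ + ‖(F k) n‖ := norm_add_le _ _
  · simp only [dist_eq_norm, sub_zero]
    calc ‖f n‖ ≤ ‖f n - (F k) n‖ + ‖(F k) n‖ := this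
      _ < ε / 2 + ε / 2 := by exact add_lt_add (lt_of_le_of_lt h1 h2) h3
      _ = ε := by ring

/-- The quotient space `Y = ℓ^∞(X)/c₀(X)`. -/
abbrev YY := (Linf X) ⧸ (czero X)

/-- The shift, as a map of bounded sequences. -/
def shiftFun (f : Linf X) : Linf X :=
  ⟨fun n => f (n + 1), memℓp_infty ⟨‖f‖, by
    rintro r ⟨n, rfl⟩
    exact lp.norm_apply_le_norm ENNReal.top_ne_zero f (n + 1)⟩⟩

@[simp] lemma shiftFun_apply (f : Linf X) (n : ℕ) : (shiftFun X f) n = f (n + 1) := rfl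

/-- The shift operator `S` on `ℓ^∞(X)`, `(Sx)ₙ = x_{n+1}`. -/
def shiftL : Linf X →L[ℂ] Linf X :=
  LinearMap.mkContinuous
    { toFun := shiftFun X
      map_add' := fun _ _ => rfl
      map_smul' := fun _ _ => rfl }
    1
    (fun f => by
      simp only [one_mul, LinearMap.coe_mk, AddHom.coe_mk]
      exact lp.norm_le_of_forall_le (norm_nonneg f)
        (fun n => lp.norm_apply_le_norm ENNReal.top_ne_zero f (n + 1)))

@[simp] lemma shiftL_apply (f : Linf X) (n : ℕ) : (shiftL X f) n = f (n + 1) := rfl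

lemma shift_mem_czero {f : Linf X} (hf : f ∈ czero X) : shiftL X f ∈ czero X := by
  have : Tendsto (fun n => f (n + 1)) atTop (𝓝 (0 : X)) :=
    hf.comp (tendsto_add_atTop_nat 1)
  show Tendsto (fun n => (shiftL X f) n) atTop (𝓝 (0 : X))
  simpa using this

/-- The reduced shift operator `S̄` on `Y = ℓ^∞(X)/c₀(X)`, as a linear map. -/
def SbarLin : YY X →ₗ[ℂ] YY X :=
  Submodule.liftQ (czero X) ((czero X).mkQ.comp (shiftL X).toLinearMap)
    (by
      intro f hf
      simp only [LinearMap.mem_ker, LinearMap.comp_apply, Submodule.mkQ_apply,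
        ContinuousLinearMap.coe_coe, Submodule.Quotient.mk_eq_zero]
      exact shift_mem_czero X hf)

lemma SbarLin_mk (f : Linf X) :
    SbarLin X (Submodule.Quotient.mk f) = Submodule.Quotient.mk (shiftL X f) := rfl

/-- The reduced shift operator `S̄` on `Y = ℓ^∞(X)/c₀(X)`. -/
def Sbar : YY X →L[ℂ] YY X :=
  (SbarLin X).mkContinuous 1 (by
    intro y
    rw [one_mul]
    refine le_of_forall_pos_le_add (fun ε hε => ?_)
    obtain ⟨m, rfl, hm⟩ := Submodule.Quotient.norm_mk_lt y hε
    rw [SbarLin_mk]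
    calc ‖(Submodule.Quotient.mk (shiftL X m) : YY X)‖ ≤ ‖shiftL X m‖ :=
          Submodule.Quotient.norm_mk_le _ _
      _ ≤ ‖m‖ := lp.norm_le_of_forall_le (norm_nonneg m)
            (fun n => lp.norm_apply_le_norm ENNReal.top_ne_zero m (n + 1))
      _ ≤ ‖(Submodule.Quotient.mk m : YY X)‖ + ε := hm.le)

lemma Sbar_mk (f : Linf X) :
    Sbar X (Submodule.Quotient.mk f) = Submodule.Quotient.mk (shiftL X f) := rfl

/-- The function `g(λ) = R(λ, S̄) x̄ = (λ - S̄)⁻¹ x̄`. -/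
def gfun (x : Linf X) (z : ℂ) : YY X :=
  (resolvent (Sbar X) z) (Submodule.Quotient.mk x)

/-- The spectrum `σ(x)` of a bounded sequence `x`: the set of points `z₀ ∈ ℂ` such that the
holomorphic function `g(λ) = R(λ, S̄) x̄` (defined for `|λ| ≠ 1`) admits no holomorphic extension
to a neighborhood of `z₀`. -/
def seqSpectrum (x : Linf X) : Set ℂ :=
  {z₀ : ℂ | ¬ ∃ (U : Set ℂ) (h : ℂ → YY X), IsOpen U ∧ z₀ ∈ U ∧ AnalyticOnNhd ℂ h U ∧
      ∀ z ∈ U, ‖z‖ ≠ 1 → h z = gfun X x z}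

/-! If `σ(x) = ∅`, the local holomorphic extensions of `g` agree with each other on overlaps, since
they agree with `g` on the dense set `|λ| ≠ 1`; so they glue to an entire function. It tends to `0`
at infinity because the resolvent does, hence vanishes by Liouville's theorem, and then
`x̄ = (2 - S̄) g(2) = 0`, i.e. `x ∈ c₀(X)`. -/

section Gluing

variable {𝕜 E F : Type*} [NontriviallyNormedField 𝕜] [NormedAddCommGroup E] [NormedSpace 𝕜 E]
  [NormedAddCommGroup F] [NormedSpace 𝕜 F]

theorem exists_differentiable_eqOn_of_forall_exists_analyticOnNhd {s : Set E} (hs : Dense s)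
    {g : E → F}
    (hloc : ∀ z₀, ∃ (U : Set E) (h : E → F), IsOpen U ∧ z₀ ∈ U ∧ AnalyticOnNhd 𝕜 h U ∧
      ∀ z ∈ U, z ∈ s → h z = g z) :
    ∃ G : E → F, Differentiable 𝕜 G ∧ Set.EqOn G g s := by
  choose U h hU hmem hh hg using hloc
  have agree (a b : E) : Set.EqOn (h a) (h b) (U a ∩ U b) := by
    refine Set.EqOn.of_subset_closure (s := U a ∩ U b ∩ s) ?_
      ((hh a).continuousOn.mono Set.inter_subset_left)
      ((hh b).continuousOn.mono Set.inter_subset_right) Set.inter_subset_left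
      (hs.open_subset_closure_inter ((hU a).inter (hU b)))
    rintro z ⟨⟨ha, hb⟩, hz⟩
    rw [hg a z ha hz, hg b z hb hz]
  refine ⟨fun z => h z z, fun z => ?_, fun z hz => hg z z (hmem z) hz⟩
  have hglue : (fun w => h w w) =ᶠ[𝓝 z] h z :=
    eventually_of_mem ((hU z).mem_nhds (hmem z)) fun w hw => agree w z ⟨hmem w, hw⟩
  exact hglue.differentiableAt_iff.2 (hh z z (hmem z)).differentiableAt

end Gluing

theorem dense_setOf_norm_ne {E : Type*} [NormedAddCommGroup E] [NormedSpace ℝ E] [Nontrivial E]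
    (r : ℝ) : Dense {z : E | ‖z‖ ≠ r} := by
  have hcompl : {z : E | ‖z‖ ≠ r} = (Metric.sphere 0 r)ᶜ := by ext; simp
  exact hcompl ▸ interior_eq_empty_iff_dense_compl.mp (interior_sphere' 0 r)

section Resolvent

variable {𝕜 E : Type*} [NontriviallyNormedField 𝕜] [NormedAddCommGroup E] [NormedSpace 𝕜 E]

theorem eq_zero_of_resolvent_apply_eq_zero {a : E →L[𝕜] E} {z : 𝕜}
    (hz : z ∈ resolventSet 𝕜 a) {v : E} (hv : resolvent a z v = 0) : v = 0 := by
  obtain ⟨u, hu⟩ := spectrum.isUnit_resolvent.mp hz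
  have hinv : (↑u⁻¹ : E →L[𝕜] E) ((u : E →L[𝕜] E) v) = v := congr($(u.inv_mul) v)
  rw [← hinv, hu, hv, map_zero]

variable [CompleteSpace E]

theorem mem_resolventSet_of_norm_le_one_of_one_lt_norm {a : E →L[𝕜] E} (ha : ‖a‖ ≤ 1)
    {z : 𝕜} (hz : 1 < ‖z‖) : z ∈ resolventSet 𝕜 a :=
  spectrum.mem_resolventSet_of_norm_lt_mul <| calc
    ‖a‖ * ‖(1 : E →L[𝕜] E)‖ ≤ 1 * 1 :=
      mul_le_mul ha ContinuousLinearMap.norm_id_le (norm_nonneg _) zero_le_one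
    _ < ‖z‖ := by rwa [one_mul]

theorem tendsto_resolvent_apply_cobounded (a : E →L[𝕜] E) (v : E) :
    Tendsto (fun z => resolvent a z v) (Bornology.cobounded 𝕜) (𝓝 0) :=
  ((ContinuousLinearMap.apply 𝕜 E v).continuous.tendsto 0).comp
    (spectrum.resolvent_tendsto_cobounded a)

end Resolvent

theorem norm_Sbar_le_one : ‖Sbar X‖ ≤ 1 :=
  LinearMap.mkContinuous_norm_le _ zero_le_one _

/-- **Theorem 1.** For a bounded sequence `x ∈ ℓ^∞(X)`, the spectrum `σ(x)` is
empty if and only if `lim_{n→∞} x n = 0` in `X`. -/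
theorem seqSpectrum_eq_empty_iff (x : Linf X) :
    seqSpectrum X x = ∅ ↔ Tendsto (fun n => x n) atTop (𝓝 (0 : X)) := by
  constructor
  · intro hσ
    obtain ⟨G, hG, hGg⟩ := exists_differentiable_eqOn_of_forall_exists_analyticOnNhd
      (dense_setOf_norm_ne 1) fun z₀ => not_not.mp (Set.eq_empty_iff_forall_notMem.mp hσ z₀)
    have hG0 : G = 0 := hG.eq_const_of_tendsto_cocompact <| by
      rw [← Metric.cobounded_eq_cocompact]
      refine (tendsto_resolvent_apply_cobounded (Sbar X) (Submodule.Quotient.mk x)).congr' ?_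
      filter_upwards [tendsto_norm_cobounded_atTop.eventually_ne_atTop 1] with z hz
      exact (hGg hz).symm
    have hg2 : gfun X x 2 = 0 := by
      rw [← hGg (show ‖(2 : ℂ)‖ ≠ 1 by norm_num), hG0, Pi.zero_apply]
    exact (Submodule.Quotient.mk_eq_zero _).mp <| eq_zero_of_resolvent_apply_eq_zero
      (mem_resolventSet_of_norm_le_one_of_one_lt_norm (norm_Sbar_le_one X) (by norm_num)) hg2
  · intro hx
    have hg : ∀ z, gfun X x z = 0 := fun z => by
      rw [gfun, (Submodule.Quotient.mk_eq_zero _).mpr hx, map_zero]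
    refine Set.eq_empty_iff_forall_notMem.mpr fun z₀ hz₀ => hz₀ ?_
    exact ⟨Set.univ, 0, isOpen_univ, Set.mem_univ z₀, analyticOnNhd_const,
      fun z _ _ => (hg z).symm⟩
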